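/- arXiv:1508.01901 — 2 statements merged into one kernel-verified Lean document; each statement's English description precedes it below -/
import Mathlib

section
/- In a Galton-Watson tree with neutral mutations started from a ≥ 1 ancestors, with offspring law π on ℤ₊² (for clonal and mutant children), the joint law of the total type-0 population T₀ and the number of first-type mutants M₁ is given by P_a(T₀ = k, M₁ = l) = (a/k)·π^{*k}_{k-a, l} for k ≥ a ≥ 1 and l ≥ 0, where π^{*k} denotes the k-fold convolution of π. -/
/-- Convolution of two (sub)probability functions on ℤ₊². -/
def conv2 (μ ν : ℕ × ℕ → ℝ) : ℕ × ℕ → ℝ := fun p =>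
  ∑ a ∈ Finset.range (p.1 + 1), ∑ b ∈ Finset.range (p.2 + 1),
    μ (a, b) * ν (p.1 - a, p.2 - b)

/-- k-fold convolution power on ℤ₊². -/
def convPow2 (μ : ℕ × ℕ → ℝ) : ℕ → ℕ × ℕ → ℝ
  | 0 => fun p => if p = (0, 0) then 1 else 0
  | k + 1 => conv2 (convPow2 μ k) μ

/-!
In `ℝ⟦Y⟧⟦X⟧`, with `X` marking clonal individuals and `Y` mutants, let `F` be the generating
function of the one-ancestor law and `P` that of `π`. The branching recursion says `F = X · P(F)`,
and the law from `a` ancestors is `F ^ a`. Splitting off the first generation gives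
`[X^(k+1)] F^(a+1) = ∑ᵢ [Xⁱ]P · [X^k] F^(a+i)`; by induction on `k` this turns into the Lagrange
inversion formula `k · [X^k] F^a = a · [X^(k-a)] P^k`, the inductive step being Euler's identity
`X · (P^(k+1))' = (k+1) · X P' · P^k`.
-/

open Finset PowerSeries

namespace PowerSeries

variable {R : Type*} [CommRing R]

theorem coeff_pow_eq_zero_of_lt {F : R⟦X⟧} (hF : constantCoeff F = 0) {n i : ℕ} (h : n < i) :
    coeff n (F ^ i) = 0 :=
  X_pow_dvd_iff.1 (pow_dvd_pow_of_dvd (X_dvd_iff.2 hF) i) n h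

theorem coeff_X_mul_derivative (f : R⟦X⟧) (n : ℕ) :
    coeff n (X * d⁄dX R f) = n • coeff n f := by
  cases n with
  | zero => simp
  | succ n => rw [coeff_succ_X_mul, coeff_derivative, nsmul_eq_mul, mul_comm]; push_cast; rfl

theorem coeff_nsmul_add_X_mul_derivative (P : R⟦X⟧) (a i : ℕ) :
    coeff i (a • P + X * d⁄dX R P) = (a + i) • coeff i P := by
  rw [map_add, map_nsmul, coeff_X_mul_derivative, add_nsmul]

theorem nsmul_coeff_nsmul_add_X_mul_derivative_mul_pow (P : R⟦X⟧) (a k n : ℕ) :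
    (k + 1) • coeff n ((a • P + X * d⁄dX R P) * P ^ k)
      = ((k + 1) * a + n) • coeff n (P ^ (k + 1)) := by
  have h : (k + 1) • ((a • P + X * d⁄dX R P) * P ^ k)
      = ((k + 1) * a) • P ^ (k + 1) + X * d⁄dX R (P ^ (k + 1)) := by
    simp only [derivative_pow, nsmul_eq_mul]
    push_cast
    ring
  rw [← map_nsmul, h, map_add, map_nsmul, coeff_X_mul_derivative, add_nsmul]

section Lagrange

-- `F = X · P(F)`, coefficientwise; the sum is finite since `X ^ i ∣ F ^ i`.
variable {P F : R⟦X⟧} (hF0 : constantCoeff F = 0)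
  (hF : ∀ n, coeff (n + 1) F = ∑ i ∈ range (n + 1), coeff i P * coeff n (F ^ i))
include hF0 hF

theorem coeff_succ_pow_succ (a k : ℕ) :
    coeff (k + 1) (F ^ (a + 1)) = ∑ i ∈ range (k + 1), coeff i P * coeff k (F ^ (a + i)) := by
  have hF_range : ∀ q ≤ k, coeff (q + 1) F = ∑ i ∈ range (k + 1), coeff i P * coeff q (F ^ i) := by
    intro q hq
    rw [hF]
    refine sum_subset (range_subset_range.2 (by omega)) fun i _ hiq => ?_
    rw [coeff_pow_eq_zero_of_lt hF0 (by simpa using hiq), mul_zero]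
  calc coeff (k + 1) (F ^ (a + 1))
      = ∑ p ∈ antidiagonal k, coeff p.1 (F ^ a) * coeff (p.2 + 1) F := by
        rw [pow_succ, coeff_mul, Nat.sum_antidiagonal_succ', coeff_zero_eq_constantCoeff_apply,
          hF0, mul_zero, zero_add]
    _ = ∑ p ∈ antidiagonal k, ∑ i ∈ range (k + 1),
          coeff i P * (coeff p.1 (F ^ a) * coeff p.2 (F ^ i)) := by
        refine sum_congr rfl fun p hp => ?_
        rw [hF_range p.2 (by have := mem_antidiagonal.1 hp; omega), mul_sum]
        exact sum_congr rfl fun i _ => by ring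
    _ = ∑ i ∈ range (k + 1), coeff i P * coeff k (F ^ (a + i)) := by
        rw [sum_comm]
        simp only [← mul_sum, pow_add, coeff_mul]

theorem lagrange_inversion_coeff_pow [IsAddTorsionFree R] {a k : ℕ} (hak : a ≤ k) :
    k • coeff k (F ^ a) = a • coeff (k - a) (P ^ k) := by
  induction k generalizing a with
  | zero =>
    obtain rfl : a = 0 := by omega
    simp
  | succ k ih =>
    obtain rfl | ⟨a, rfl⟩ : a = 0 ∨ ∃ b, a = b + 1 := by cases a <;> simp
    · simp
    obtain rfl | hk : k = 0 ∨ k ≠ 0 := eq_or_ne k 0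
    · obtain rfl : a = 0 := by omega
      simpa using hF 0
    rw [Nat.add_sub_add_right]
    have hsum : k • coeff (k + 1) (F ^ (a + 1))
        = coeff (k - a) ((a • P + X * d⁄dX R P) * P ^ k) := by
      rw [coeff_succ_pow_succ hF0 hF, smul_sum, coeff_mul,
        Nat.sum_antidiagonal_eq_sum_range_succ
          (fun i j => coeff i (a • P + X * d⁄dX R P) * coeff j (P ^ k))]
      rw [← sum_subset (range_subset_range.2 (by omega : k - a + 1 ≤ k + 1)) fun i _ hi => ?_]
      · refine sum_congr rfl fun i hi => ?_
        have hi : a + i ≤ k := by have := mem_range.1 hi; omega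
        rw [← mul_smul_comm, ih hi, coeff_nsmul_add_X_mul_derivative, smul_mul_assoc,
          mul_smul_comm, Nat.sub_sub]
      · rw [coeff_pow_eq_zero_of_lt hF0 (by simp at hi; omega), mul_zero, smul_zero]
    apply nsmul_right_injective hk
    dsimp only
    rw [smul_comm, hsum, nsmul_coeff_nsmul_add_X_mul_derivative_mul_pow, ← mul_nsmul']
    congr 1
    have : a ≤ k := by omega
    zify [this]
    ring

end Lagrange
end PowerSeries

noncomputable def genFun (μ : ℕ × ℕ → ℝ) : ℝ⟦X⟧⟦X⟧ :=
  mk fun n => mk fun l => μ (n, l)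

@[simp]
theorem coeff_coeff_genFun (μ : ℕ × ℕ → ℝ) (n l : ℕ) :
    coeff l (coeff n (genFun μ)) = μ (n, l) := by
  simp [genFun]

theorem genFun_conv2 (μ ν : ℕ × ℕ → ℝ) : genFun (conv2 μ ν) = genFun μ * genFun ν := by
  ext n l
  simp only [coeff_coeff_genFun, coeff_mul, map_sum, Nat.sum_antidiagonal_eq_sum_range_succ_mk,
    conv2]

theorem genFun_convPow2 (μ : ℕ × ℕ → ℝ) (k : ℕ) : genFun (convPow2 μ k) = genFun μ ^ k := by
  induction k with
  | zero =>
    ext n l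
    rw [coeff_coeff_genFun, pow_zero, coeff_one]
    split_ifs with hn <;> simp [convPow2, hn, coeff_one]
  | succ k ih => rw [pow_succ, ← ih, ← genFun_conv2]; rfl

theorem convPow2_apply (μ : ℕ × ℕ → ℝ) (k n l : ℕ) :
    convPow2 μ k (n, l) = coeff l (coeff n (genFun μ ^ k)) := by
  rw [← genFun_convPow2, coeff_coeff_genFun]

section BranchingRecursion

variable {π μ : ℕ × ℕ → ℝ} (hrec : ∀ n m : ℕ, μ (n, m) =
  ∑' kl : ℕ × ℕ, if kl.2 ≤ m ∧ 1 ≤ n then π kl * convPow2 μ kl.1 (n - 1, m - kl.2) else 0)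
include hrec

theorem constantCoeff_genFun_of_rec : constantCoeff (genFun μ) = 0 := by
  ext m
  rw [← coeff_zero_eq_constantCoeff_apply, coeff_coeff_genFun, hrec]
  simp

theorem coeff_succ_genFun_of_rec (n : ℕ) :
    coeff (n + 1) (genFun μ)
      = ∑ i ∈ range (n + 1), coeff i (genFun π) * coeff n (genFun μ ^ i) := by
  ext m
  rw [coeff_coeff_genFun, hrec, tsum_eq_sum (s := range (n + 1) ×ˢ range (m + 1)), sum_product,
    map_sum]
  · refine sum_congr rfl fun i _ => ?_
    rw [coeff_mul, Nat.sum_antidiagonal_eq_sum_range_succ_mk]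
    refine sum_congr rfl fun j hj => ?_
    rw [if_pos ⟨by simpa [Nat.lt_succ_iff] using hj, by omega⟩, convPow2_apply]
    simp
  · rintro ⟨i, j⟩ hij
    split_ifs with hj
    · rw [convPow2_apply, coeff_pow_eq_zero_of_lt (constantCoeff_genFun_of_rec hrec), map_zero,
        mul_zero]
      simp only [mem_product, mem_range, not_and_or, not_lt] at hij
      omega
    · rfl

end BranchingRecursion

theorem gw_neutral_mutations_otter_dwass_general
    (π : ℕ × ℕ → ℝ)
    (μ : ℕ × ℕ → ℝ)
    (hrec : ∀ n m : ℕ, μ (n, m) =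
      ∑' kl : ℕ × ℕ,
        if kl.2 ≤ m ∧ 1 ≤ n then π kl * convPow2 μ kl.1 (n - 1, m - kl.2) else 0) :
    ∀ a k l : ℕ, 1 ≤ a → a ≤ k →
      convPow2 μ a (k, l) = ((a : ℝ) / k) * convPow2 π k (k - a, l) := by
  intro a k l ha hak
  have := IsAddTorsionFree.of_module_rat ℝ⟦X⟧
  have h := congrArg (coeff l) <| lagrange_inversion_coeff_pow (constantCoeff_genFun_of_rec hrec)
    (coeff_succ_genFun_of_rec hrec) hak
  rw [map_nsmul, map_nsmul, ← convPow2_apply, ← convPow2_apply, nsmul_eq_mul, nsmul_eq_mul] at h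
  have hk : (k : ℝ) ≠ 0 := Nat.cast_ne_zero.2 (by omega)
  rw [div_mul_eq_mul_div, eq_div_iff hk, mul_comm, h]

/-- Otter–Dwass / Lagrange inversion formula for a Galton-Watson forest with neutral
mutations: started from `a ≥ 1` ancestors (law = a-fold convolution of the one-ancestor
law `μ`, which satisfies the branching recursion), the joint law of `(T₀, M₁)` is
`P_a(T₀ = k, M₁ = l) = (a/k)·π^{*k}_{k-a, l}` for `k ≥ a ≥ 1`, `l ≥ 0`. -/
theorem gw_neutral_mutations_otter_dwass
    (π : ℕ × ℕ → ℝ) (hπnn : ∀ kl, 0 ≤ π kl) (hπ1 : ∑' kl : ℕ × ℕ, π kl = 1)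
    (μ : ℕ × ℕ → ℝ) (hμnn : ∀ kl, 0 ≤ μ kl) (hμ1 : ∑' kl : ℕ × ℕ, μ kl = 1)
    (hrec : ∀ n m : ℕ, μ (n, m) =
      ∑' kl : ℕ × ℕ,
        if kl.2 ≤ m ∧ 1 ≤ n then π kl * convPow2 μ kl.1 (n - 1, m - kl.2) else 0) :
    ∀ a k l : ℕ, 1 ≤ a → a ≤ k →
      convPow2 μ a (k, l) = ((a : ℝ) / k) * convPow2 π k (k - a, l) :=
  gw_neutral_mutations_otter_dwass_general π μ hrec
end

section
/- Let φₙ(x,y) = E₁(x^{T_{n-1}} y^{Mₙ}) be the joint generating function of the total type-(n-1) population and the number of type-n mutants, and let f_{n-1}(y) = φ_{n-1}(1,y) be the generating function of M_{n-1}. Then for all x, y ∈ [0,1], φₙ(x,y) = f_{n-1}(φ₁(x,y)). -/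
open scoped ENNReal

lemma tsum_conv_split (H : ℕ×ℕ → ℕ×ℕ → ℝ≥0∞) :
    ∑' p : ℕ×ℕ, ∑ a ∈ Finset.range (p.1+1), ∑ b ∈ Finset.range (p.2+1), H (a,b) (p.1-a, p.2-b)
      = ∑' q : ℕ×ℕ, ∑' r : ℕ×ℕ, H q r := by
  have step1 : ∀ p : ℕ×ℕ,
      (∑ a ∈ Finset.range (p.1+1), ∑ b ∈ Finset.range (p.2+1), H (a,b) (p.1-a, p.2-b))
      = ∑' q : ℕ×ℕ, if q.1 ≤ p.1 ∧ q.2 ≤ p.2 then H q (p.1-q.1, p.2-q.2) else 0 := by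
    intro p
    rw [ENNReal.tsum_prod']
    rw [tsum_eq_sum (s := Finset.range (p.1+1)) ?h1]
    · refine Finset.sum_congr rfl fun a ha => ?_
      rw [tsum_eq_sum (s := Finset.range (p.2+1)) ?h2]
      · refine Finset.sum_congr rfl fun b hb => ?_
        simp only [Finset.mem_range, Nat.lt_succ_iff] at ha hb
        simp [ha, hb]
      · intro b hb
        simp only [Finset.mem_range, Nat.lt_succ_iff, not_le] at hb
        simp [Nat.not_le.2 hb]
    · intro a ha
      simp only [Finset.mem_range, Nat.lt_succ_iff, not_le] at ha
      simp [Nat.not_le.2 ha]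
  simp only [step1]
  rw [ENNReal.tsum_comm]
  refine tsum_congr fun q => ?_
  have hinj : Function.Injective (fun r : ℕ×ℕ => (q.1 + r.1, q.2 + r.2) : ℕ×ℕ → ℕ×ℕ) := by
    intro r s h
    simp only [Prod.mk.injEq] at h
    exact Prod.ext (by omega) (by omega)
  rw [← hinj.tsum_eq ?hsupp]
  · refine tsum_congr fun r => ?_
    simp
  · intro p hp
    simp only [Function.mem_support, ne_eq] at hp
    by_contra hr
    apply hp
    simp only [Set.mem_range, Prod.mk.injEq, not_exists] at hr
    have : ¬ (q.1 ≤ p.1 ∧ q.2 ≤ p.2) := by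
      intro ⟨h1, h2⟩
      exact hr (p.1 - q.1, p.2 - q.2) (by ext <;> simp <;> omega)
    simp [this]

lemma gf_conv2E (μ ν : ℕ×ℕ → ℝ≥0∞) (X Y : ℝ≥0∞) :
    ∑' p : ℕ×ℕ, (∑ a ∈ Finset.range (p.1+1), ∑ b ∈ Finset.range (p.2+1),
        μ (a,b) * ν (p.1-a, p.2-b)) * X ^ p.1 * Y ^ p.2
      = (∑' q : ℕ×ℕ, μ q * X ^ q.1 * Y ^ q.2) * (∑' r : ℕ×ℕ, ν r * X ^ r.1 * Y ^ r.2) := by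
  have key : ∀ p : ℕ×ℕ,
      (∑ a ∈ Finset.range (p.1+1), ∑ b ∈ Finset.range (p.2+1),
        μ (a,b) * ν (p.1-a, p.2-b)) * X ^ p.1 * Y ^ p.2
      = ∑ a ∈ Finset.range (p.1+1), ∑ b ∈ Finset.range (p.2+1),
          (μ (a,b) * X ^ a * Y ^ b) * (ν (p.1-a, p.2-b) * X ^ (p.1-a) * Y ^ (p.2-b)) := by
    intro p
    rw [Finset.sum_mul, Finset.sum_mul]
    refine Finset.sum_congr rfl fun a ha => ?_
    rw [Finset.sum_mul, Finset.sum_mul]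
    refine Finset.sum_congr rfl fun b hb => ?_
    simp only [Finset.mem_range, Nat.lt_succ_iff] at ha hb
    have hx : X ^ p.1 = X ^ a * X ^ (p.1 - a) := by
      rw [← pow_add]; congr 1; omega
    have hy : Y ^ p.2 = Y ^ b * Y ^ (p.2 - b) := by
      rw [← pow_add]; congr 1; omega
    rw [hx, hy]; ring
  simp only [key]
  rw [tsum_conv_split (fun q r => (μ q * X ^ q.1 * Y ^ q.2) * (ν r * X ^ r.1 * Y ^ r.2))]
  rw [← ENNReal.tsum_mul_right]
  exact tsum_congr fun q => ENNReal.tsum_mul_left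

lemma convPow2_nonneg {μ : ℕ×ℕ → ℝ} (hμ : ∀ p, 0 ≤ μ p) (j : ℕ) (p : ℕ×ℕ) :
    0 ≤ convPow2 μ j p := by
  induction j generalizing p with
  | zero => simp only [convPow2]; positivity
  | succ k ih =>
      simp only [convPow2, conv2]
      exact Finset.sum_nonneg fun a _ => Finset.sum_nonneg fun b _ =>
        mul_nonneg (ih _) (hμ _)

lemma gf_convPow2 {μ : ℕ×ℕ → ℝ} (hμ : ∀ p, 0 ≤ μ p) (j : ℕ) (X Y : ℝ≥0∞) :
    ∑' p : ℕ×ℕ, ENNReal.ofReal (convPow2 μ j p) * X ^ p.1 * Y ^ p.2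
      = (∑' p : ℕ×ℕ, ENNReal.ofReal (μ p) * X ^ p.1 * Y ^ p.2) ^ j := by
  induction j with
  | zero =>
      simp only [convPow2, pow_zero]
      rw [tsum_eq_single ((0,0) : ℕ×ℕ)]
      · simp
      · intro b hb; rw [if_neg hb]; simp
  | succ k ih =>
      have : ∀ p : ℕ×ℕ, ENNReal.ofReal (convPow2 μ (k+1) p)
          = ∑ a ∈ Finset.range (p.1+1), ∑ b ∈ Finset.range (p.2+1),
              ENNReal.ofReal (convPow2 μ k (a,b)) * ENNReal.ofReal (μ (p.1-a, p.2-b)) := by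
        intro p
        simp only [convPow2, conv2]
        rw [ENNReal.ofReal_sum_of_nonneg]
        · refine Finset.sum_congr rfl fun a _ => ?_
          rw [ENNReal.ofReal_sum_of_nonneg]
          · exact Finset.sum_congr rfl fun b _ => ENNReal.ofReal_mul (convPow2_nonneg hμ _ _)
          · intro b _; exact mul_nonneg (convPow2_nonneg hμ _ _) (hμ _)
        · intro a _
          exact Finset.sum_nonneg fun b _ => mul_nonneg (convPow2_nonneg hμ _ _) (hμ _)
      simp only [this]
      exact (gf_conv2E (fun q => ENNReal.ofReal (convPow2 μ k q))
        (fun q => ENNReal.ofReal (μ q)) X Y).trans (by rw [ih, pow_succ])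

/-- Let `ρ n` be the law of `(T_{n-1}, Mₙ)` (one ancestor) for `n ≥ 1`, with the Markov
branching transition `ρ_{n+1}(k,l) = ∑ⱼ P(Mₙ = j) · (ρ 1)^{*j}(k,l)`. Then the joint
generating functions `φₙ(x,y) = E₁(x^{T_{n-1}} y^{Mₙ})` satisfy
`φₙ(x,y) = f_{n-1}(φ₁(x,y))` where `f(s) = E₁(s^{M₁})` and `f_{n-1} = f^[n-1]`. -/
theorem gw_neutral_mutations_iteration_identity
    (ρ : ℕ → ℕ × ℕ → ℝ)
    (hρnn : ∀ n kl, 0 ≤ ρ n kl) (hρ1 : ∀ n, 1 ≤ n → ∑' kl : ℕ × ℕ, ρ n kl = 1)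
    (htrans : ∀ n, 1 ≤ n → ∀ kl : ℕ × ℕ,
      ρ (n + 1) kl = ∑' j : ℕ, (∑' i : ℕ, ρ n (i, j)) * convPow2 (ρ 1) j kl) :
    ∀ n, 1 ≤ n → ∀ x ∈ Set.Icc (0:ℝ) 1, ∀ y ∈ Set.Icc (0:ℝ) 1,
      (∑' kl : ℕ × ℕ, ρ n kl * x ^ kl.1 * y ^ kl.2)
        = (fun s : ℝ => ∑' kl : ℕ × ℕ, ρ 1 kl * s ^ kl.2)^[n - 1]
            (∑' kl : ℕ × ℕ, ρ 1 kl * x ^ kl.1 * y ^ kl.2) := by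
  -- Summability of ρ n for n ≥ 1
  have hsum : ∀ n, 1 ≤ n → Summable (ρ n) := by
    intro n hn
    by_contra h
    have := tsum_eq_zero_of_not_summable h
    rw [hρ1 n hn] at this
    norm_num at this
  -- ENNReal version
  set E : ℕ → ℕ × ℕ → ℝ≥0∞ := fun n p => ENNReal.ofReal (ρ n p) with hE
  have hEsum : ∀ n, 1 ≤ n → ∑' p : ℕ×ℕ, E n p = 1 := by
    intro n hn
    rw [hE]
    rw [← ENNReal.ofReal_tsum_of_nonneg (fun p => hρnn n p) (hsum n hn), hρ1 n hn]
    simp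
  set φE : ℕ → ℝ≥0∞ → ℝ≥0∞ → ℝ≥0∞ :=
    fun n X Y => ∑' p : ℕ×ℕ, E n p * X ^ p.1 * Y ^ p.2 with hφE
  set fE : ℝ≥0∞ → ℝ≥0∞ := fun s => ∑' p : ℕ×ℕ, E 1 p * s ^ p.2 with hfE
  -- convPow2 (ρ 1) j values are ≤ 1
  have hcp_le : ∀ j p, convPow2 (ρ 1) j p ≤ 1 := by
    intro j p
    have h1 : ∑' q : ℕ×ℕ, ENNReal.ofReal (convPow2 (ρ 1) j q) = 1 := by
      have := gf_convPow2 (μ := ρ 1) (fun p => hρnn 1 p) j 1 1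
      simp only [one_pow, mul_one] at this
      rw [this, hEsum 1 le_rfl, one_pow]
    have h2 : ENNReal.ofReal (convPow2 (ρ 1) j p) ≤ 1 := h1 ▸ ENNReal.le_tsum p
    have := (ENNReal.ofReal_le_ofReal_iff (by norm_num : (0:ℝ) ≤ 1)).mp
      (by simpa using h2)
    exact this
  -- Summability of the marginal P and slices
  have hslice : ∀ n, 1 ≤ n → ∀ j : ℕ, Summable (fun i => ρ n (i, j)) := by
    intro n hn j
    exact ((hsum n hn).prod_symm).prod_factor j
  have hPsum : ∀ n, 1 ≤ n → Summable (fun j => ∑' i : ℕ, ρ n (i, j)) := by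
    intro n hn
    exact (((hsum n hn).prod_symm).hasSum.prod_fiberwise
      (fun j => (hslice n hn j).hasSum)).summable
  have hPnn : ∀ n (j : ℕ), 0 ≤ ∑' i : ℕ, ρ n (i, j) :=
    fun n j => tsum_nonneg fun i => hρnn n _
  -- the transition in ENNReal
  have htransE : ∀ n, 1 ≤ n → ∀ p : ℕ×ℕ,
      E (n+1) p = ∑' j : ℕ, ENNReal.ofReal (∑' i : ℕ, ρ n (i, j))
        * ENNReal.ofReal (convPow2 (ρ 1) j p) := by
    intro n hn p
    have hsummable : Summable (fun j => (∑' i : ℕ, ρ n (i, j)) * convPow2 (ρ 1) j p) := by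
      refine Summable.of_nonneg_of_le
        (fun j => mul_nonneg (hPnn n j) (convPow2_nonneg (fun q => hρnn 1 q) j p))
        (fun j => ?_) (hPsum n hn)
      calc (∑' i : ℕ, ρ n (i, j)) * convPow2 (ρ 1) j p
          ≤ (∑' i : ℕ, ρ n (i, j)) * 1 := by
            exact mul_le_mul_of_nonneg_left (hcp_le j p) (hPnn n j)
        _ = _ := mul_one _
    rw [hE]
    simp only
    rw [htrans n hn p, ENNReal.ofReal_tsum_of_nonneg
      (fun j => mul_nonneg (hPnn n j) (convPow2_nonneg (fun q => hρnn 1 q) j p)) hsummable]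
    exact tsum_congr fun j => ENNReal.ofReal_mul (hPnn n j)
  -- marginal gf identity: φE n 1 s = ∑' j, ofReal (P j) * s ^ j
  have hmarg : ∀ n, 1 ≤ n → ∀ s : ℝ≥0∞,
      φE n 1 s = ∑' j : ℕ, ENNReal.ofReal (∑' i : ℕ, ρ n (i, j)) * s ^ j := by
    intro n hn s
    rw [hφE]
    simp only [one_pow, mul_one]
    have hswap : ∑' p : ℕ×ℕ, E n p * s ^ p.2
        = ∑' p : ℕ×ℕ, E n (p.2, p.1) * s ^ p.1 := by
      rw [← (Equiv.prodComm ℕ ℕ).tsum_eq (fun p : ℕ×ℕ => E n p * s ^ p.2)]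
      exact tsum_congr fun p => by rcases p with ⟨a, b⟩; rfl
    rw [hswap, ENNReal.tsum_prod']
    refine tsum_congr fun j => ?_
    show ∑' i : ℕ, E n (i, j) * s ^ j = _
    rw [ENNReal.tsum_mul_right]
    congr 1
    rw [hE]
    simp only
    rw [ENNReal.ofReal_tsum_of_nonneg (fun i => hρnn n _) (hslice n hn j)]
  -- Main identity in ENNReal
  have mainE : ∀ n, 1 ≤ n → ∀ X Y : ℝ≥0∞, φE n X Y = fE^[n-1] (φE 1 X Y) := by
    intro n hn
    induction n, hn using Nat.le_induction with
    | base => intro X Y; simp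
    | succ n hn ih =>
        intro X Y
        have step : φE (n+1) X Y = φE n 1 (φE 1 X Y) := by
          rw [hφE]
          simp only
          calc ∑' p : ℕ×ℕ, E (n+1) p * X ^ p.1 * Y ^ p.2
              = ∑' p : ℕ×ℕ, ∑' j : ℕ, ENNReal.ofReal (∑' i : ℕ, ρ n (i, j))
                  * (ENNReal.ofReal (convPow2 (ρ 1) j p) * X ^ p.1 * Y ^ p.2) := by
                refine tsum_congr fun p => ?_
                rw [htransE n hn p, ← ENNReal.tsum_mul_right, ← ENNReal.tsum_mul_right]
                exact tsum_congr fun j => by ring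
            _ = ∑' j : ℕ, ENNReal.ofReal (∑' i : ℕ, ρ n (i, j))
                  * ∑' p : ℕ×ℕ, ENNReal.ofReal (convPow2 (ρ 1) j p) * X ^ p.1 * Y ^ p.2 := by
                rw [ENNReal.tsum_comm]
                exact tsum_congr fun j => ENNReal.tsum_mul_left
            _ = ∑' j : ℕ, ENNReal.ofReal (∑' i : ℕ, ρ n (i, j)) * (φE 1 X Y) ^ j := by
                refine tsum_congr fun j => ?_
                rw [gf_convPow2 (fun q => hρnn 1 q) j X Y]
            _ = φE n 1 (φE 1 X Y) := (hmarg n hn _).symm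
        rw [step, ih 1 (φE 1 X Y)]
        have hfe : φE 1 1 (φE 1 X Y) = fE (φE 1 X Y) := by
          rw [hφE, hfE]; simp only [one_pow, mul_one]
        rw [hfe]
        have : n + 1 - 1 = (n - 1) + 1 := by omega
        rw [this, Function.iterate_succ_apply]
  -- Back to ℝ
  intro n hn x hx y hy
  obtain ⟨hx0, hx1⟩ := hx
  obtain ⟨hy0, hy1⟩ := hy
  set X := ENNReal.ofReal x with hX
  set Y := ENNReal.ofReal y with hY
  have hterm_nn : ∀ m (s t : ℝ), 0 ≤ s → 0 ≤ t → ∀ kl : ℕ×ℕ, 0 ≤ ρ m kl * s ^ kl.1 * t ^ kl.2 :=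
    fun m s t hs ht kl => mul_nonneg (mul_nonneg (hρnn m kl) (pow_nonneg hs _)) (pow_nonneg ht _)
  have hsum_xy : ∀ m, 1 ≤ m → ∀ s t : ℝ, s ∈ Set.Icc (0:ℝ) 1 → t ∈ Set.Icc (0:ℝ) 1 →
      Summable (fun kl : ℕ×ℕ => ρ m kl * s ^ kl.1 * t ^ kl.2) := by
    intro m hm s t hs ht
    refine Summable.of_nonneg_of_le (hterm_nn m s t hs.1 ht.1) (fun kl => ?_) (hsum m hm)
    calc ρ m kl * s ^ kl.1 * t ^ kl.2
        ≤ ρ m kl * 1 * 1 := by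
          apply mul_le_mul
          · apply mul_le_mul le_rfl (pow_le_one₀ hs.1 hs.2) (pow_nonneg hs.1 _) (hρnn m kl)
          · exact pow_le_one₀ ht.1 ht.2
          · exact pow_nonneg ht.1 _
          · exact mul_nonneg (hρnn m kl) zero_le_one
      _ = ρ m kl := by ring
  -- ofReal of gf equals φE
  have hofgf : ∀ m, 1 ≤ m → ∀ s t : ℝ, s ∈ Set.Icc (0:ℝ) 1 → t ∈ Set.Icc (0:ℝ) 1 →
      ENNReal.ofReal (∑' kl : ℕ×ℕ, ρ m kl * s ^ kl.1 * t ^ kl.2)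
        = φE m (ENNReal.ofReal s) (ENNReal.ofReal t) := by
    intro m hm s t hs ht
    rw [ENNReal.ofReal_tsum_of_nonneg (hterm_nn m s t hs.1 ht.1) (hsum_xy m hm s t hs ht)]
    refine tsum_congr fun kl => ?_
    rw [ENNReal.ofReal_mul (mul_nonneg (hρnn m kl) (pow_nonneg hs.1 _)),
      ENNReal.ofReal_mul (hρnn m kl), ENNReal.ofReal_pow hs.1, ENNReal.ofReal_pow ht.1]
  -- the real f and its properties
  set fR : ℝ → ℝ := fun s => ∑' kl : ℕ×ℕ, ρ 1 kl * s ^ kl.2 with hfR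
  have hfR_eq : ∀ s : ℝ, s ∈ Set.Icc (0:ℝ) 1 →
      fR s = ∑' kl : ℕ×ℕ, ρ 1 kl * (1:ℝ) ^ kl.1 * s ^ kl.2 := by
    intro s hs
    exact tsum_congr fun kl => by rw [one_pow, mul_one]
  have hfR_mem : ∀ s : ℝ, s ∈ Set.Icc (0:ℝ) 1 → fR s ∈ Set.Icc (0:ℝ) 1 := by
    intro s hs
    rw [hfR_eq s hs]
    constructor
    · exact tsum_nonneg (hterm_nn 1 1 s (by norm_num) hs.1)
    · calc ∑' kl : ℕ×ℕ, ρ 1 kl * (1:ℝ) ^ kl.1 * s ^ kl.2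
          ≤ ∑' kl : ℕ×ℕ, ρ 1 kl := by
            refine Summable.tsum_le_tsum (fun kl => ?_)
              (hsum_xy 1 le_rfl 1 s ⟨by norm_num, le_rfl⟩ hs) (hsum 1 le_rfl)
            rw [one_pow, mul_one]
            calc ρ 1 kl * s ^ kl.2 ≤ ρ 1 kl * 1 :=
                  mul_le_mul_of_nonneg_left (pow_le_one₀ hs.1 hs.2) (hρnn 1 kl)
              _ = ρ 1 kl := mul_one _
        _ = 1 := hρ1 1 le_rfl
  have hfR_ofReal : ∀ s : ℝ, s ∈ Set.Icc (0:ℝ) 1 →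
      ENNReal.ofReal (fR s) = fE (ENNReal.ofReal s) := by
    intro s hs
    rw [hfR_eq s hs, hofgf 1 le_rfl 1 s ⟨by norm_num, le_rfl⟩ hs, hφE, hfE]
    simp only [ENNReal.ofReal_one, one_pow, mul_one]
  -- iterate lemma
  have hiter : ∀ m : ℕ, ∀ s : ℝ, s ∈ Set.Icc (0:ℝ) 1 →
      fR^[m] s ∈ Set.Icc (0:ℝ) 1 ∧ ENNReal.ofReal (fR^[m] s) = fE^[m] (ENNReal.ofReal s) := by
    intro m
    induction m with
    | zero => intro s hs; simp [hs]
    | succ k ih =>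
        intro s hs
        rw [Function.iterate_succ_apply, Function.iterate_succ_apply]
        have h1 := hfR_mem s hs
        obtain ⟨hm, he⟩ := ih (fR s) h1
        exact ⟨hm, by rw [he, hfR_ofReal s hs]⟩
  -- the gf φ1(x,y) is in [0,1]
  have hφ1_mem : (∑' kl : ℕ×ℕ, ρ 1 kl * x ^ kl.1 * y ^ kl.2) ∈ Set.Icc (0:ℝ) 1 := by
    constructor
    · exact tsum_nonneg (hterm_nn 1 x y hx0 hy0)
    · calc ∑' kl : ℕ×ℕ, ρ 1 kl * x ^ kl.1 * y ^ kl.2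
          ≤ ∑' kl : ℕ×ℕ, ρ 1 kl := by
            refine Summable.tsum_le_tsum (fun kl => ?_)
              (hsum_xy 1 le_rfl x y ⟨hx0, hx1⟩ ⟨hy0, hy1⟩) (hsum 1 le_rfl)
            calc ρ 1 kl * x ^ kl.1 * y ^ kl.2
                ≤ ρ 1 kl * 1 * 1 := by
                  apply mul_le_mul
                  · exact mul_le_mul_of_nonneg_left (pow_le_one₀ hx0 hx1) (hρnn 1 kl)
                  · exact pow_le_one₀ hy0 hy1
                  · exact pow_nonneg hy0 _
                  · exact mul_nonneg (hρnn 1 kl) zero_le_one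
              _ = ρ 1 kl := by ring
        _ = 1 := hρ1 1 le_rfl
  -- conclude
  have lhs_nn : 0 ≤ ∑' kl : ℕ×ℕ, ρ n kl * x ^ kl.1 * y ^ kl.2 :=
    tsum_nonneg (hterm_nn n x y hx0 hy0)
  obtain ⟨hrhs_mem, hrhs_eq⟩ := hiter (n-1) _ hφ1_mem
  refine (ENNReal.ofReal_eq_ofReal_iff lhs_nn hrhs_mem.1).mp ?_
  rw [hofgf n hn x y ⟨hx0, hx1⟩ ⟨hy0, hy1⟩, hrhs_eq,
    hofgf 1 le_rfl x y ⟨hx0, hx1⟩ ⟨hy0, hy1⟩]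
  exact mainE n hn X Y
end
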